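/- arXiv:1203.0431 — 5 statements merged into one kernel-verified Lean document; each statement's English description precedes it below -/
import Mathlib

section
/- With f_m^k(e) = (Σ_j e_j^m)(Σ_j e_j)^{k-m}, the third-moment identities hold: E[f_3^3] = l·γ_b³ + l·γ_ε³, E[f_2^3] = l²·γ_b³ + l·γ_ε³, and E[f_1^3] = l³·γ_b³ + l·γ_ε³. -/
/-!
Write `e_j = b + ε_j`. For an independent centred family `X`, the moment `E[X_p X_q X_r]`
vanishes unless `p = q = r`: an index distinct from the other two splits off a factor of mean
zero. Expanding the products therefore gives `E[e_i e_j e_k] = γ_b³ + [i = j = k] γ_ε³`, and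
`f_3^3`, `f_2^3`, `f_1^3` are sums of `l`, `l²`, `l³` such triple products, exactly `l` of which
have `i = j = k`.
-/

open MeasureTheory ProbabilityTheory Finset

namespace MeasureTheory

variable {Ω ι : Type*} [MeasurableSpace Ω] {μ : Measure Ω}

lemma memLp_three_of_integrable_pow_three {f : Ω → ℝ} (hf : AEStronglyMeasurable f μ)
    (h : Integrable (fun ω => f ω ^ 3) μ) : MemLp f 3 μ := by
  rw [← integrable_norm_rpow_iff hf (by norm_num) (by norm_num)]
  simpa [← abs_pow] using h.abs

lemma integrable_mul_mul_of_memLp_three {f g h : Ω → ℝ} (hf : MemLp f 3 μ) (hg : MemLp g 3 μ)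
    (hh : MemLp h 3 μ) : Integrable (fun ω => f ω * g ω * h ω) μ := by
  have cube {u : Ω → ℝ} (hu : MemLp u 3 μ) : Integrable (fun ω => |u ω| ^ 3) μ := by
    simpa using hu.integrable_norm_pow (p := 3) (by norm_num)
  refine ((cube hf).add (cube hg) |>.add (cube hh)).mono'
    (hf.1.mul hg.1 |>.mul hh.1) (ae_of_all _ fun ω => ?_)
  simp only [Pi.add_apply, Real.norm_eq_abs, abs_mul]
  have hx := abs_nonneg (f ω); have hy := abs_nonneg (g ω); have hz := abs_nonneg (h ω)
  generalize |f ω| = x at *; generalize |g ω| = y at *; generalize |h ω| = z at *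
  -- x³ + y³ + z³ - 3xyz = (x + y + z)((x - y)² + (y - z)² + (z - x)²) / 2
  nlinarith [mul_nonneg (mul_nonneg hx hy) hz, mul_nonneg (add_nonneg (add_nonneg hx hy) hz)
    (add_nonneg (add_nonneg (sq_nonneg (x - y)) (sq_nonneg (y - z))) (sq_nonneg (z - x)))]

lemma integral_sum_mul_sum_mul_sum {X : ι → Ω → ℝ} (hX : ∀ i, MemLp (X i) 3 μ)
    (s t u : Finset ι) :
    ∫ ω, (∑ p ∈ s, X p ω) * (∑ q ∈ t, X q ω) * (∑ r ∈ u, X r ω) ∂μ =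
      ∑ p ∈ s, ∑ q ∈ t, ∑ r ∈ u, ∫ ω, X p ω * X q ω * X r ω ∂μ := by
  have hint p q r := integrable_mul_mul_of_memLp_three (hX p) (hX q) (hX r)
  have hexpand (ω : Ω) : (∑ p ∈ s, X p ω) * (∑ q ∈ t, X q ω) * (∑ r ∈ u, X r ω) =
      ∑ p ∈ s, ∑ q ∈ t, ∑ r ∈ u, X p ω * X q ω * X r ω := by
    rw [Finset.sum_mul_sum, Finset.sum_mul]
    simp_rw [Finset.sum_mul, Finset.mul_sum]
  simp only [hexpand]
  rw [integral_finsetSum _ fun p _ =>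
    integrable_finsetSum _ fun q _ => integrable_finsetSum _ fun r _ => hint p q r]
  refine Finset.sum_congr rfl fun p _ => ?_
  rw [integral_finsetSum _ fun q _ => integrable_finsetSum _ fun r _ => hint p q r]
  exact Finset.sum_congr rfl fun q _ => integral_finsetSum _ fun r _ => hint p q r

section ThirdMoments

variable [Fintype ι] [DecidableEq ι] {e : ι → Ω → ℝ} {c d : ℝ}

lemma integral_sum_cube (he : ∀ i, MemLp (e i) 3 μ)
    (hM : ∀ i j k, ∫ ω, e i ω * e j ω * e k ω ∂μ = c + if i = j ∧ j = k then d else 0) :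
    ∫ ω, ∑ i, e i ω ^ 3 ∂μ = Fintype.card ι * c + Fintype.card ι * d := by
  simp_rw [pow_three']
  rw [integral_finsetSum _ fun i _ => integrable_mul_mul_of_memLp_three (he i) (he i) (he i)]
  simp [hM]

lemma integral_sum_sq_mul_sum (he : ∀ i, MemLp (e i) 3 μ)
    (hM : ∀ i j k, ∫ ω, e i ω * e j ω * e k ω ∂μ = c + if i = j ∧ j = k then d else 0) :
    ∫ ω, (∑ i, e i ω ^ 2) * (∑ j, e j ω) ∂μ = Fintype.card ι ^ 2 * c + Fintype.card ι * d := by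
  have hint i j := integrable_mul_mul_of_memLp_three (he i) (he i) (he j)
  simp_rw [sq, Finset.sum_mul_sum]
  rw [integral_finsetSum _ fun i _ => integrable_finsetSum _ fun j _ => hint i j]
  simp [integral_finsetSum _ fun j _ => hint _ j, hM, Finset.sum_add_distrib]
  ring

lemma integral_cube_sum (he : ∀ i, MemLp (e i) 3 μ)
    (hM : ∀ i j k, ∫ ω, e i ω * e j ω * e k ω ∂μ = c + if i = j ∧ j = k then d else 0) :
    ∫ ω, (∑ i, e i ω) ^ 3 ∂μ = Fintype.card ι ^ 3 * c + Fintype.card ι * d := by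
  simp_rw [pow_three']
  rw [integral_sum_mul_sum_mul_sum he]
  simp [hM, Finset.sum_add_distrib, ite_and]
  ring

end ThirdMoments

end MeasureTheory

namespace ProbabilityTheory

variable {Ω ι : Type*} [MeasurableSpace Ω] {μ : Measure Ω}

lemma iIndepFun.integral_mul_mul_eq_zero {X : ι → Ω → ℝ} (hX : iIndepFun X μ)
    (hmeas : ∀ i, AEMeasurable (X i) μ) (hmean : ∀ i, μ[X i] = 0) {i j k : ι} (hij : i ≠ j)
    (hik : i ≠ k) : ∫ ω, X i ω * (X j ω * X k ω) ∂μ = 0 := by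
  have := (hX.indepFun_mul_right₀ hmeas i j k hij hik).integral_mul_eq_mul_integral
    (hmeas i).aestronglyMeasurable ((hmeas j).mul (hmeas k)).aestronglyMeasurable
  rwa [hmean i, zero_mul] at this

lemma iIndepFun.integral_mul_mul [DecidableEq ι] {X : ι → Ω → ℝ} (hX : iIndepFun X μ)
    (hmeas : ∀ i, AEMeasurable (X i) μ) (hmean : ∀ i, μ[X i] = 0) (i j k : ι) :
    ∫ ω, X i ω * X j ω * X k ω ∂μ = if i = j ∧ j = k then ∫ ω, X i ω ^ 3 ∂μ else 0 := by
  split_ifs with h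
  · obtain ⟨rfl, rfl⟩ := h
    simp only [pow_three, mul_assoc]
  -- some index differs from the other two; factor its variable out
  have hzero {p q r : ι} (hpq : p ≠ q) (hpr : p ≠ r)
      (hpqr : ∀ ω, X i ω * X j ω * X k ω = X p ω * (X q ω * X r ω)) :
      ∫ ω, X i ω * X j ω * X k ω ∂μ = 0 := by
    simp only [hpqr, hX.integral_mul_mul_eq_zero hmeas hmean hpq hpr]
  by_cases hi : i ≠ j ∧ i ≠ k
  · exact hzero hi.1 hi.2 fun ω => by ring
  by_cases hj : j ≠ i ∧ j ≠ k
  · exact hzero hj.1 hj.2 fun ω => by ring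
  exact hzero (p := k) (q := i) (r := j) (by grind) (by grind) fun ω => by ring

lemma iIndepFun.integral_add_mul_add_mul_add [DecidableEq ι] {Z : Ω → ℝ} {W : ι → Ω → ℝ}
    (hindep : iIndepFun (fun i : Option ι => Option.elim i Z W) μ) (hZ : MemLp Z 3 μ)
    (hW : ∀ i, MemLp (W i) 3 μ) (hZmean : μ[Z] = 0) (hWmean : ∀ i, μ[W i] = 0) (i j k : ι) :
    ∫ ω, (Z ω + W i ω) * (Z ω + W j ω) * (Z ω + W k ω) ∂μ =
      ∫ ω, Z ω ^ 3 ∂μ + if i = j ∧ j = k then ∫ ω, W i ω ^ 3 ∂μ else 0 := by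
  set Y : Option ι → Ω → ℝ := fun i => Option.elim i Z W
  have hY : ∀ p, MemLp (Y p) 3 μ := by rintro (_ | p); exacts [hZ, hW p]
  have hYmean : ∀ p, μ[Y p] = 0 := by rintro (_ | p); exacts [hZmean, hWmean p]
  have hpair (i : ι) (ω : Ω) : Z ω + W i ω = ∑ p ∈ {none, some i}, Y p ω := by simp [Y]
  simp only [hpair, integral_sum_mul_sum_mul_sum hY,
    hindep.integral_mul_mul (fun p => (hY p).aemeasurable) hYmean]
  simp [Y]

end ProbabilityTheory

theorem third_moment_f_identities_general
    {l : ℕ}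
    {Ω : Type*} [MeasureSpace Ω]
    (b : Ω → ℝ) (ε : Fin l → Ω → ℝ)
    (hbmeas : Measurable b) (hεmeas : ∀ j, Measurable (ε j))
    (hindep : ProbabilityTheory.iIndepFun
      (fun i : Option (Fin l) => Option.elim i b ε) ℙ)
    (hεmean : ∀ j, ∫ ω, ε j ω = 0)
    (hεint3 : ∀ j, Integrable (fun ω => (ε j ω) ^ 3) ℙ)
    (hbint3 : Integrable (fun ω => (b ω) ^ 3) ℙ)
    (γb3 γε3 : ℝ)
    (hbmean : ∫ ω, b ω = 0)
    (hb3 : ∫ ω, (b ω) ^ 3 = γb3)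
    (hε3 : ∀ j, ∫ ω, (ε j ω) ^ 3 = γε3) :
    (∫ ω, ∑ j, (b ω + ε j ω) ^ 3 = (l : ℝ) * γb3 + (l : ℝ) * γε3) ∧
    (∫ ω, (∑ j, (b ω + ε j ω) ^ 2) * (∑ j, (b ω + ε j ω))
        = (l : ℝ) ^ 2 * γb3 + (l : ℝ) * γε3) ∧
    (∫ ω, (∑ j, (b ω + ε j ω)) ^ 3 = (l : ℝ) ^ 3 * γb3 + (l : ℝ) * γε3) := by
  have hb : MemLp b 3 ℙ := memLp_three_of_integrable_pow_three hbmeas.aestronglyMeasurable hbint3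
  have hε j : MemLp (ε j) 3 ℙ :=
    memLp_three_of_integrable_pow_three (hεmeas j).aestronglyMeasurable (hεint3 j)
  have he j : MemLp (fun ω => b ω + ε j ω) 3 ℙ := hb.add (hε j)
  have hM i j k : ∫ ω, (b ω + ε i ω) * (b ω + ε j ω) * (b ω + ε k ω) =
      γb3 + if i = j ∧ j = k then γε3 else 0 := by
    rw [hindep.integral_add_mul_add_mul_add hb hε hbmean hεmean, hb3, hε3]
  refine ⟨?_, ?_, ?_⟩
  · simpa using integral_sum_cube he hM
  · simpa using integral_sum_sq_mul_sum he hM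
  · simpa using integral_cube_sum he hM

/-- third-moment identities for . -/
theorem third_moment_f_identities
    {l : ℕ} (hl : 1 ≤ l)
    {Ω : Type*} [MeasureSpace Ω] [IsProbabilityMeasure (ℙ : Measure Ω)]
    (b : Ω → ℝ) (ε : Fin l → Ω → ℝ)
    (hbmeas : Measurable b) (hεmeas : ∀ j, Measurable (ε j))
    (hindep : ProbabilityTheory.iIndepFun
      (fun i : Option (Fin l) => Option.elim i b ε) ℙ)
    (hident : ∀ j j' : Fin l, Measure.map (ε j) ℙ = Measure.map (ε j') ℙ)
    (hεmean : ∀ j, ∫ ω, ε j ω = 0)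
    (hεint2 : ∀ j, Integrable (fun ω => (ε j ω) ^ 2) ℙ)
    (hεint3 : ∀ j, Integrable (fun ω => (ε j ω) ^ 3) ℙ)
    (hbint3 : Integrable (fun ω => (b ω) ^ 3) ℙ)
    (γb3 γε3 : ℝ)
    (hbmean : ∫ ω, b ω = 0)
    (hb3 : ∫ ω, (b ω) ^ 3 = γb3)
    (hε3 : ∀ j, ∫ ω, (ε j ω) ^ 3 = γε3) :
    (∫ ω, ∑ j, (b ω + ε j ω) ^ 3 = (l : ℝ) * γb3 + (l : ℝ) * γε3) ∧
    (∫ ω, (∑ j, (b ω + ε j ω) ^ 2) * (∑ j, (b ω + ε j ω))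
        = (l : ℝ) ^ 2 * γb3 + (l : ℝ) * γε3) ∧
    (∫ ω, (∑ j, (b ω + ε j ω)) ^ 3 = (l : ℝ) ^ 3 * γb3 + (l : ℝ) * γε3) :=
  third_moment_f_identities_general b ε hbmeas hεmeas hindep hεmean hεint3 hbint3 γb3 γε3 hbmean hb3
    hε3
end

section
/- With the notation above, E[2·f_1^3 + l²·f_3^3 − 3l·f_2^3] = l(l−1)(l−2)·γ_ε³; that is, this linear combination of the f_m^3 eliminates all moments of b and isolates the third moment of ε. -/
/-!
The combination `2 p₁³ + n² p₃ - 3 n p₂ p₁` of power sums is unchanged when a common constant is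
added to all variables, so `b` drops out pointwise. Expanding the remaining terms into moments
`E[εᵢ εⱼ εₖ]`, independence and centring kill every term in which some index differs from the
other two, so `E[p₁³] = E[p₂ p₁] = E[p₃] = l γ` and the combination has mean `(2 + l² - 3 l) l γ`.
-/

open MeasureTheory ProbabilityTheory Finset

section PowerSums

variable {ι R : Type*} [Fintype ι] [CommRing R]

/-- `2 f₁ + n² f₃ - 3 n f₂` for `fₘ = pₘ p₁ ^ (3 - m)`, `pₘ = ∑ xⱼ ^ m` and `n` variables. -/
def cubicPowerSumCombination (x : ι → R) : R :=
  2 * (∑ j, x j) ^ 3 + (Fintype.card ι : R) ^ 2 * ∑ j, x j ^ 3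
    - 3 * (Fintype.card ι : R) * ((∑ j, x j ^ 2) * ∑ j, x j)

theorem cubicPowerSumCombination_const_add (c : R) (x : ι → R) :
    cubicPowerSumCombination (fun j => c + x j) = cubicPowerSumCombination x := by
  have hcube (j : ι) : (c + x j) ^ 3 = c ^ 3 + 3 * c ^ 2 * x j + 3 * c * x j ^ 2 + x j ^ 3 := by
    ring
  simp only [cubicPowerSumCombination, hcube, add_sq, sum_add_distrib, ← mul_sum, sum_const,
    card_univ, nsmul_eq_mul]
  ring

theorem sum_pow_three_eq_sum_sum_sum (x : ι → R) :
    (∑ i, x i) ^ 3 = ∑ i, ∑ j, ∑ k, x i * x j * x k := by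
  rw [pow_three', sum_mul_sum, sum_mul]
  simp_rw [sum_mul_sum]

theorem sum_sq_mul_sum_eq_sum_sum (x : ι → R) :
    (∑ i, x i ^ 2) * ∑ j, x j = ∑ i, ∑ j, x i * x i * x j := by
  simp only [sq, sum_mul_sum]

end PowerSums

instance ENNReal.holderTriple_three_three : ENNReal.HolderTriple 3 3 (3 / 2) :=
  ⟨by rw [ENNReal.inv_div (by simp) (by simp), ← two_mul, div_eq_mul_inv]⟩

instance ENNReal.holderTriple_threeHalves_three : ENNReal.HolderTriple (3 / 2) 3 1 :=
  ⟨by rw [ENNReal.inv_div (by simp) (by simp), inv_one, div_eq_mul_inv, ← add_one_mul,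
    two_add_one_eq_three, ENNReal.mul_inv_cancel] <;> norm_num⟩

section ThirdMoments

variable {Ω : Type*} [MeasurableSpace Ω] {μ : Measure Ω}

theorem memLp_of_integrable_pow {f : Ω → ℝ} {n : ℕ} (hn : n ≠ 0)
    (hf : AEStronglyMeasurable f μ) (hfn : Integrable (fun ω => f ω ^ n) μ) : MemLp f n μ := by
  rw [← integrable_norm_rpow_iff hf (by simpa using hn) (by simp)]
  simpa [abs_pow] using hfn.norm

theorem MeasureTheory.MemLp.integrable_pow {f : Ω → ℝ} {n : ℕ} (hn : n ≠ 0) (hf : MemLp f n μ) :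
    Integrable (fun ω => f ω ^ n) μ :=
  (hf.integrable_norm_pow hn).mono' (hf.aestronglyMeasurable.pow n) (.of_forall fun ω => by simp)

theorem MeasureTheory.MemLp.integrable_mul_mul {f g h : Ω → ℝ} (hf : MemLp f 3 μ)
    (hg : MemLp g 3 μ) (hh : MemLp h 3 μ) : Integrable (f * g * h) μ :=
  (hg.mul (r := 3 / 2) hf).integrable_mul hh

variable {ι : Type*} {X : ι → Ω → ℝ}

theorem integral_mul_mul_eq_zero_of_ne (hindep : iIndepFun X μ)
    (hmeas : ∀ i, AEMeasurable (X i) μ) {i j k : ι} (hik : i ≠ k) (hjk : j ≠ k)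
    (hk : ∫ ω, X k ω ∂μ = 0) : ∫ ω, X i ω * X j ω * X k ω ∂μ = 0 := by
  have hXiXj : AEStronglyMeasurable (X i * X j) μ :=
    ((hmeas i).mul (hmeas j)).aestronglyMeasurable
  simpa [hk] using (hindep.indepFun_mul_left₀ hmeas i j k hik hjk).integral_mul_eq_mul_integral
    hXiXj (hmeas k).aestronglyMeasurable

theorem integral_mul_mul_eq_ite [DecidableEq ι] (hindep : iIndepFun X μ)
    (hmeas : ∀ i, AEMeasurable (X i) μ) (hmean : ∀ i, ∫ ω, X i ω ∂μ = 0) (i j k : ι) :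
    ∫ ω, X i ω * X j ω * X k ω ∂μ = if j = i ∧ k = i then ∫ ω, X i ω ^ 3 ∂μ else 0 := by
  have hzero {i j k : ι} := integral_mul_mul_eq_zero_of_ne hindep hmeas (i := i) (j := j) (k := k)
  rcases eq_or_ne j i with rfl | hji
  · rcases eq_or_ne k j with rfl | hkj
    · simp only [and_self, if_true, pow_three, mul_assoc]
    · simpa [hkj] using hzero hkj.symm hkj.symm (hmean k)
  · simp only [hji, false_and, if_false]
    rcases eq_or_ne k i with rfl | hki
    · calc ∫ ω, X k ω * X j ω * X k ω ∂μ = ∫ ω, X k ω * X k ω * X j ω ∂μ := by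
            congr 1 with ω; ring
        _ = 0 := hzero hji.symm hji.symm (hmean j)
    rcases eq_or_ne k j with rfl | hkj
    · calc ∫ ω, X i ω * X k ω * X k ω ∂μ = ∫ ω, X k ω * X k ω * X i ω ∂μ := by
            congr 1 with ω; ring
        _ = 0 := hzero hji hji (hmean i)
    · exact hzero hki.symm hkj.symm (hmean k)

variable [Fintype ι]

theorem integrable_sum_pow_three (hX : ∀ i, MemLp (X i) 3 μ) :
    Integrable (fun ω => (∑ i, X i ω) ^ 3) μ := by
  simp_rw [sum_pow_three_eq_sum_sum_sum]
  exact integrable_finsetSum _ fun i _ => integrable_finsetSum _ fun j _ =>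
    integrable_finsetSum _ fun k _ => (hX i).integrable_mul_mul (hX j) (hX k)

theorem integrable_sum_sq_mul_sum (hX : ∀ i, MemLp (X i) 3 μ) :
    Integrable (fun ω => (∑ i, X i ω ^ 2) * ∑ i, X i ω) μ := by
  simp_rw [sum_sq_mul_sum_eq_sum_sum]
  exact integrable_finsetSum _ fun i _ => integrable_finsetSum _ fun j _ =>
    (hX i).integrable_mul_mul (hX i) (hX j)

theorem integral_sum_pow_three (hindep : iIndepFun X μ) (hX : ∀ i, MemLp (X i) 3 μ)
    (hmean : ∀ i, ∫ ω, X i ω ∂μ = 0) :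
    ∫ ω, (∑ i, X i ω) ^ 3 ∂μ = ∑ i, ∫ ω, X i ω ^ 3 ∂μ := by
  classical
  have hmeas i := (hX i).aestronglyMeasurable.aemeasurable
  have hint i j k : Integrable (fun ω => X i ω * X j ω * X k ω) μ :=
    (hX i).integrable_mul_mul (hX j) (hX k)
  simp_rw [sum_pow_three_eq_sum_sum_sum]
  rw [integral_finsetSum _ fun i _ =>
    integrable_finsetSum _ fun j _ => integrable_finsetSum _ fun k _ => hint i j k]
  simp [integral_finsetSum, integrable_finsetSum, hint, integral_mul_mul_eq_ite hindep hmeas hmean,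
    ite_and]

theorem integral_sum_sq_mul_sum (hindep : iIndepFun X μ) (hX : ∀ i, MemLp (X i) 3 μ)
    (hmean : ∀ i, ∫ ω, X i ω ∂μ = 0) :
    ∫ ω, (∑ i, X i ω ^ 2) * ∑ i, X i ω ∂μ = ∑ i, ∫ ω, X i ω ^ 3 ∂μ := by
  classical
  have hmeas i := (hX i).aestronglyMeasurable.aemeasurable
  have hint i j k : Integrable (fun ω => X i ω * X j ω * X k ω) μ :=
    (hX i).integrable_mul_mul (hX j) (hX k)
  simp_rw [sum_sq_mul_sum_eq_sum_sum]
  simp [integral_finsetSum, integrable_finsetSum, hint, integral_mul_mul_eq_ite hindep hmeas hmean]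

theorem integral_cubicPowerSumCombination (hindep : iIndepFun X μ) (hX : ∀ i, MemLp (X i) 3 μ)
    (hmean : ∀ i, ∫ ω, X i ω ∂μ = 0) :
    ∫ ω, cubicPowerSumCombination (fun i => X i ω) ∂μ
      = ((Fintype.card ι : ℝ) - 1) * ((Fintype.card ι : ℝ) - 2) * ∑ i, ∫ ω, X i ω ^ 3 ∂μ := by
  have h1 := integrable_sum_pow_three hX
  have h2 := integrable_sum_sq_mul_sum hX
  have h3 := integrable_finsetSum univ fun i _ => (hX i).integrable_pow three_ne_zero
  simp only [cubicPowerSumCombination]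
  rw [integral_sub ?_ (h2.const_mul _), integral_add (h1.const_mul _) (h3.const_mul _),
    integral_const_mul, integral_const_mul, integral_const_mul,
    integral_sum_pow_three hindep hX hmean, integral_sum_sq_mul_sum hindep hX hmean,
    integral_finsetSum _ fun i _ => (hX i).integrable_pow three_ne_zero]
  · ring
  · exact (h1.const_mul _).add (h3.const_mul _)

end ThirdMoments

theorem third_moment_eps_combination_general
    {l : ℕ}
    {Ω : Type*} [MeasureSpace Ω]
    (b : Ω → ℝ) (ε : Fin l → Ω → ℝ)
    (hεmeas : ∀ j, Measurable (ε j))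
    (hindep : ProbabilityTheory.iIndepFun
      (fun i : Option (Fin l) => Option.elim i b ε) ℙ)
    (hεmean : ∀ j, ∫ ω, ε j ω = 0)
    (hεint3 : ∀ j, Integrable (fun ω => (ε j ω) ^ 3) ℙ)
    (γε3 : ℝ)
    (hε3 : ∀ j, ∫ ω, (ε j ω) ^ 3 = γε3) :
    ∫ ω, (2 * (∑ j, (b ω + ε j ω)) ^ 3
        + (l : ℝ) ^ 2 * ∑ j, (b ω + ε j ω) ^ 3
        - 3 * (l : ℝ) * (∑ j, (b ω + ε j ω) ^ 2) * (∑ j, (b ω + ε j ω)))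
      = (l : ℝ) * ((l : ℝ) - 1) * ((l : ℝ) - 2) * γε3 := by
  have hεindep : iIndepFun ε ℙ := hindep.precomp (g := Option.some) (Option.some_injective _)
  have hεLp j := memLp_of_integrable_pow three_ne_zero (hεmeas j).aestronglyMeasurable (hεint3 j)
  calc _ = ∫ ω, cubicPowerSumCombination (fun j => ε j ω) := by
        congr 1 with ω
        rw [← cubicPowerSumCombination_const_add (b ω)]
        simp only [cubicPowerSumCombination, Fintype.card_fin, mul_assoc]
    _ = _ := by
        rw [integral_cubicPowerSumCombination hεindep hεLp hεmean]
        simp only [hε3, sum_const, card_univ, Fintype.card_fin, nsmul_eq_mul]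
        ring

theorem third_moment_eps_combination
    {l : ℕ} (hl : 3 ≤ l)
    {Ω : Type*} [MeasureSpace Ω] [IsProbabilityMeasure (ℙ : Measure Ω)]
    (b : Ω → ℝ) (ε : Fin l → Ω → ℝ)
    (hbmeas : Measurable b) (hεmeas : ∀ j, Measurable (ε j))
    (hindep : ProbabilityTheory.iIndepFun
      (fun i : Option (Fin l) => Option.elim i b ε) ℙ)
    (hident : ∀ j j' : Fin l, Measure.map (ε j) ℙ = Measure.map (ε j') ℙ)
    (hεmean : ∀ j, ∫ ω, ε j ω = 0)
    (hεint3 : ∀ j, Integrable (fun ω => (ε j ω) ^ 3) ℙ)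
    (hbint3 : Integrable (fun ω => (b ω) ^ 3) ℙ)
    (γε3 : ℝ)
    (hbmean : ∫ ω, b ω = 0)
    (hε3 : ∀ j, ∫ ω, (ε j ω) ^ 3 = γε3) :
    ∫ ω, (2 * (∑ j, (b ω + ε j ω)) ^ 3
        + (l : ℝ) ^ 2 * ∑ j, (b ω + ε j ω) ^ 3
        - 3 * (l : ℝ) * (∑ j, (b ω + ε j ω) ^ 2) * (∑ j, (b ω + ε j ω)))
      = (l : ℝ) * ((l : ℝ) - 1) * ((l : ℝ) - 2) * γε3 :=
  third_moment_eps_combination_general b ε hεmeas hindep hεmean hεint3 γε3 hε3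
end

section
/- With the notation above, E[(2l² − l)·f_4^4 − (5l − 4)·f_3^4 + 3·f_2^4 − 3·f_5^4] = 2l(l−1)(l−2)·γ_ε⁴. -/
/-!
Write `Q` for the statistic of the statement, as a function of the sample `e = b + ε`. Expanding
power sums shows that `Q` is exactly affine along the diagonal: `Q(c + x) = Q(x) + 3c·C(x)` with
`C(x) = l² ∑ (xⱼ - x̄)³`. As `b` is centred and independent of `ε`, the correction has mean zero, so
`E Q(e) = E Q(ε)`. In `Q(ε)` the monomials `εⱼ²εₖ²` of `f₂` and `f₅` cancel, and every remaining
monomial other than `εⱼ⁴` contains some `εₖ` exactly once, so has mean zero by independence. The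
`εⱼ⁴` survive with total weight `(2l² - l) - (5l - 4)`, giving `2l(l-1)(l-2)γ`.
-/

open MeasureTheory ProbabilityTheory Finset

section PowerSums

variable {ι : Type*} [Fintype ι]

def powerSum (x : ι → ℝ) (k : ℕ) : ℝ := ∑ j, x j ^ k

lemma powerSum_zero (x : ι → ℝ) : powerSum x 0 = Fintype.card ι := by
  simp [powerSum]

lemma powerSum_const_add (c : ℝ) (x : ι → ℝ) (k : ℕ) :
    powerSum (fun j => c + x j) k
      = ∑ i ∈ range (k + 1), c ^ i * k.choose i * powerSum x (k - i) := by
  simp only [powerSum, add_pow, mul_sum]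
  rw [sum_comm]
  exact sum_congr rfl fun i _ => sum_congr rfl fun j _ => by ring

/-- `(2l² - l)·f₄⁴ - (5l - 4)·f₃⁴ + 3·f₂⁴ - 3·f₅⁴` of the statement, with `l = card ι`. -/
def quarticStat (x : ι → ℝ) : ℝ :=
  (2 * (Fintype.card ι : ℝ) ^ 2 - Fintype.card ι) * powerSum x 4
    - (5 * (Fintype.card ι : ℝ) - 4) * powerSum x 3 * powerSum x 1
    + 3 * powerSum x 2 * powerSum x 1 ^ 2 - 3 * powerSum x 2 ^ 2

/-- `l² ∑ (xⱼ - x̄)³` with `l = card ι`. -/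
def thirdCentralStat (x : ι → ℝ) : ℝ :=
  (Fintype.card ι : ℝ) ^ 2 * powerSum x 3 - 3 * Fintype.card ι * powerSum x 1 * powerSum x 2
    + 2 * powerSum x 1 ^ 3

lemma quarticStat_const_add (c : ℝ) (x : ι → ℝ) :
    quarticStat (fun j => c + x j) = quarticStat x + 3 * c * thirdCentralStat x := by
  simp only [quarticStat, thirdCentralStat, powerSum_const_add, sum_range_succ, sum_range_zero]
  norm_num [Nat.choose, powerSum_zero]
  ring

lemma quarticStat_eq_sum [DecidableEq ι] (x : ι → ℝ) :
    quarticStat x = (2 * (Fintype.card ι : ℝ) ^ 2 - Fintype.card ι) * ∑ j, x j ^ 4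
      - (5 * (Fintype.card ι : ℝ) - 4) * ∑ j, ∑ k, x j ^ 3 * x k
      + 3 * ∑ j, ∑ k, ∑ m ∈ univ.erase k, x j ^ 2 * x k * x m := by
  have hcross : ∑ j, ∑ k, ∑ m ∈ univ.erase k, x j ^ 2 * x k * x m
      = powerSum x 2 * (powerSum x 1 ^ 2 - powerSum x 2) := by
    simp only [mul_assoc, ← mul_sum, sum_erase_eq_sub (mem_univ _)]
    simp only [← sum_mul, mul_sub, sum_sub_distrib, ← sum_mul_sum]
    simp only [powerSum, pow_one, sq]
  rw [hcross, ← sum_mul_sum]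
  simp only [quarticStat, powerSum, pow_one]
  ring

end PowerSums

instance ENNReal.holderTriple_four_four_two : ENNReal.HolderTriple 4 4 2 :=
  ⟨by rw [show (4 : ENNReal) = 2 * 2 by norm_num, ENNReal.mul_inv (by simp) (by simp), ← mul_add,
    ENNReal.inv_two_add_inv_two, mul_one]⟩

section Moments

variable {Ω : Type*} [MeasurableSpace Ω] {μ : Measure Ω}

lemma memLp_four_of_integrable_pow_four {f : Ω → ℝ} (hf : AEStronglyMeasurable f μ)
    (h4 : Integrable (fun ω => f ω ^ 4) μ) : MemLp f 4 μ := by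
  rw [← integrable_norm_rpow_iff hf (by norm_num) (by norm_num)]
  refine h4.congr (ae_of_all _ fun ω => ?_)
  simp only [ENNReal.toReal_ofNat, Real.norm_eq_abs]
  rw [show (4 : ℝ) = (4 : ℕ) by norm_num, Real.rpow_natCast, (by decide : Even 4).pow_abs]

lemma integrable_sq_mul_mul_of_memLp_four {f g h : Ω → ℝ} (hf : MemLp f 4 μ) (hg : MemLp g 4 μ)
    (hh : MemLp h 4 μ) : Integrable (fun ω => f ω ^ 2 * g ω * h ω) μ := by
  have hff : MemLp (f * f) 2 μ := hf.mul hf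
  have hgh : MemLp (g * h) 2 μ := hh.mul hg
  exact (hff.integrable_mul hgh).congr (ae_of_all _ fun ω => by simp only [Pi.mul_apply]; ring)

variable {ι : Type*} [Fintype ι]

lemma integrable_quarticStat {x : ι → Ω → ℝ} (hx : ∀ j, MemLp (x j) 4 μ) :
    Integrable (fun ω => quarticStat fun j => x j ω) μ := by
  classical
  have hint211 (j k m : ι) := integrable_sq_mul_mul_of_memLp_four (hx j) (hx k) (hx m)
  have hint31 (j k : ι) : Integrable (fun ω => x j ω ^ 3 * x k ω) μ :=
    (hint211 j j k).congr (ae_of_all _ fun ω => by ring)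
  have hint4 (j : ι) : Integrable (fun ω => x j ω ^ 4) μ :=
    (hint211 j j j).congr (ae_of_all _ fun ω => by ring)
  simp_rw [quarticStat_eq_sum]
  fun_prop

lemma ProbabilityTheory.iIndepFun.integral_mul_comp_eq_zero {κ : Type*} {X : κ → Ω → ℝ}
    (h : iIndepFun X μ) (hX : ∀ i, Measurable (X i)) {i : κ}
    (hi : ∫ ω, X i ω ∂μ = 0) {S : Finset κ} (hiS : i ∉ S) {G : (S → ℝ) → ℝ} (hG : Measurable G) :
    ∫ ω, X i ω * G (fun t => X t ω) ∂μ = 0 := by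
  have hindep : IndepFun (X i) (fun ω => G fun t => X t ω) μ :=
    (h.indepFun_finset {i} S (disjoint_singleton_left.2 hiS) hX).comp
      (measurable_pi_apply (⟨i, mem_singleton_self i⟩ : ({i} : Finset κ))) hG
  rw [hindep.integral_fun_mul_eq_mul_integral (hX i).aestronglyMeasurable
    (hG.comp (measurable_pi_lambda _ fun t => hX t)).aestronglyMeasurable]
  simp [hi]

lemma integral_quarticStat {X : ι → Ω → ℝ} (h : iIndepFun X μ) (hX : ∀ j, Measurable (X j))
    (hmean : ∀ j, ∫ ω, X j ω ∂μ = 0) (h4 : ∀ j, Integrable (fun ω => X j ω ^ 4) μ) {γ : ℝ}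
    (hγ : ∀ j, ∫ ω, X j ω ^ 4 ∂μ = γ) :
    ∫ ω, quarticStat (fun j => X j ω) ∂μ
      = 2 * Fintype.card ι * (Fintype.card ι - 1) * (Fintype.card ι - 2) * γ := by
  classical
  have hL4 (j : ι) := memLp_four_of_integrable_pow_four (hX j).aestronglyMeasurable (h4 j)
  have hint211 (j k m : ι) := integrable_sq_mul_mul_of_memLp_four (hL4 j) (hL4 k) (hL4 m)
  have hint31 (j k : ι) : Integrable (fun ω => X j ω ^ 3 * X k ω) μ :=
    (hint211 j j k).congr (ae_of_all _ fun ω => by ring)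
  have hvanish31 (j k : ι) (hjk : j ≠ k) : ∫ ω, X j ω ^ 3 * X k ω ∂μ = 0 := by
    have := h.integral_mul_comp_eq_zero hX (hmean k) (S := {j}) (by simpa using hjk.symm)
      (G := fun v => v ⟨j, mem_singleton_self j⟩ ^ 3) (by fun_prop)
    simpa only [mul_comm] using this
  have hvanish211 (j k m : ι) (hkm : k ≠ m) : ∫ ω, X j ω ^ 2 * X k ω * X m ω ∂μ = 0 := by
    by_cases hjk : j = k
    · subst hjk
      simpa only [← pow_succ] using hvanish31 j m hkm
    · have := h.integral_mul_comp_eq_zero hX (hmean k) (S := {j, m})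
        (by simp [Ne.symm hjk, hkm]) (G := fun v => v ⟨j, by simp⟩ ^ 2 * v ⟨m, by simp⟩)
        (by fun_prop)
      simpa only [mul_comm, mul_left_comm] using this
  have hdiag (j : ι) : ∑ k, ∫ ω, X j ω ^ 3 * X k ω ∂μ = γ := by
    rw [sum_eq_single j (fun k _ hkj => hvanish31 j k (Ne.symm hkj)) (by simp)]
    simp only [← pow_succ, hγ]
  have hsum31 : ∫ ω, ∑ j, ∑ k, X j ω ^ 3 * X k ω ∂μ = ∑ _j : ι, γ := by
    rw [integral_finsetSum _ fun j _ => by fun_prop]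
    exact sum_congr rfl fun j _ => by rw [integral_finsetSum _ fun k _ => hint31 j k, hdiag]
  have hsum211 : ∫ ω, ∑ j, ∑ k, ∑ m ∈ univ.erase k, X j ω ^ 2 * X k ω * X m ω ∂μ = 0 := by
    rw [integral_finsetSum _ fun j _ => by fun_prop]
    refine sum_eq_zero fun j _ => ?_
    rw [integral_finsetSum _ fun k _ => by fun_prop]
    refine sum_eq_zero fun k _ => ?_
    rw [integral_finsetSum _ fun m _ => hint211 j k m]
    exact sum_eq_zero fun m hm => hvanish211 j k m (ne_of_mem_erase hm).symm
  simp_rw [quarticStat_eq_sum]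
  rw [integral_add (by fun_prop) (by fun_prop), integral_sub (by fun_prop) (by fun_prop),
    integral_const_mul, integral_const_mul, integral_const_mul,
    integral_finsetSum _ fun j _ => h4 j, hsum31, hsum211]
  simp only [hγ, sum_const, card_univ, nsmul_eq_mul]
  ring

end Moments

theorem fourth_moment_eps_first_step_general
    {l : ℕ}
    {Ω : Type*} [MeasureSpace Ω]
    (b : Ω → ℝ) (ε : Fin l → Ω → ℝ)
    (hbmeas : Measurable b) (hεmeas : ∀ j, Measurable (ε j))
    (hindep : ProbabilityTheory.iIndepFun
      (fun i : Option (Fin l) => Option.elim i b ε) ℙ)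
    (hεmean : ∀ j, ∫ ω, ε j ω = 0)
    (hεint4 : ∀ j, Integrable (fun ω => (ε j ω) ^ 4) ℙ)
    (hbint4 : Integrable (fun ω => (b ω) ^ 4) ℙ)
    (hbmean : ∫ ω, b ω = 0)
    (γε4 : ℝ)
    (hε4 : ∀ j, ∫ ω, (ε j ω) ^ 4 = γε4) :
    ∫ ω, ((2 * (l : ℝ) ^ 2 - (l : ℝ)) * ∑ j, (b ω + ε j ω) ^ 4
          - (5 * (l : ℝ) - 4) * (∑ j, (b ω + ε j ω) ^ 3) * (∑ j, (b ω + ε j ω))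
          + 3 * (∑ j, (b ω + ε j ω) ^ 2) * (∑ j, (b ω + ε j ω)) ^ 2
          - 3 * (∑ j, (b ω + ε j ω) ^ 2) ^ 2)
      = 2 * (l : ℝ) * ((l : ℝ) - 1) * ((l : ℝ) - 2) * γε4 := by
  have hX : ∀ i, Measurable (Option.elim i b ε) := by
    rintro (_ | j)
    exacts [hbmeas, hεmeas j]
  have hbL4 := memLp_four_of_integrable_pow_four hbmeas.aestronglyMeasurable hbint4
  have hεL4 j := memLp_four_of_integrable_pow_four (hεmeas j).aestronglyMeasurable (hεint4 j)
  have hcorrection : ∫ ω, b ω * thirdCentralStat (fun j => ε j ω) = 0 :=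
    hindep.integral_mul_comp_eq_zero hX (i := none) hbmean (S := univ.erase none) (by simp)
      (G := fun v => thirdCentralStat fun j => v ⟨some j, by simp⟩)
      (by unfold thirdCentralStat powerSum; fun_prop)
  calc _ = ∫ ω, quarticStat fun j => b ω + ε j ω := by simp [quarticStat, powerSum]
    _ = (∫ ω, quarticStat fun j => ε j ω)
          + ∫ ω, ((quarticStat fun j => b ω + ε j ω) - quarticStat fun j => ε j ω) := by
      rw [integral_sub (integrable_quarticStat (x := fun j ω => b ω + ε j ω)
        fun j => hbL4.add (hεL4 j)) (integrable_quarticStat hεL4)]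
      ring
    _ = ∫ ω, quarticStat fun j => ε j ω := by
      simp_rw [quarticStat_const_add, add_sub_cancel_left, mul_assoc, integral_const_mul, hcorrection]
      simp
    _ = _ := by
      simpa using integral_quarticStat (hindep.precomp (Option.some_injective _)) hεmeas hεmean
        hεint4 hε4

/-- first-step combination isolating the fourth moment of ε. -/
theorem fourth_moment_eps_first_step
    {l : ℕ} (hl : 3 ≤ l)
    {Ω : Type*} [MeasureSpace Ω] [IsProbabilityMeasure (ℙ : Measure Ω)]
    (b : Ω → ℝ) (ε : Fin l → Ω → ℝ)
    (hbmeas : Measurable b) (hεmeas : ∀ j, Measurable (ε j))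
    (hindep : ProbabilityTheory.iIndepFun
      (fun i : Option (Fin l) => Option.elim i b ε) ℙ)
    (hident : ∀ j j' : Fin l, Measure.map (ε j) ℙ = Measure.map (ε j') ℙ)
    (hεmean : ∀ j, ∫ ω, ε j ω = 0)
    (hεint4 : ∀ j, Integrable (fun ω => (ε j ω) ^ 4) ℙ)
    (hbint4 : Integrable (fun ω => (b ω) ^ 4) ℙ)
    (hbmean : ∫ ω, b ω = 0)
    (γε4 : ℝ)
    (hε4 : ∀ j, ∫ ω, (ε j ω) ^ 4 = γε4) :
    ∫ ω, ((2 * (l : ℝ) ^ 2 - (l : ℝ)) * ∑ j, (b ω + ε j ω) ^ 4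
          - (5 * (l : ℝ) - 4) * (∑ j, (b ω + ε j ω) ^ 3) * (∑ j, (b ω + ε j ω))
          + 3 * (∑ j, (b ω + ε j ω) ^ 2) * (∑ j, (b ω + ε j ω)) ^ 2
          - 3 * (∑ j, (b ω + ε j ω) ^ 2) ^ 2)
      = 2 * (l : ℝ) * ((l : ℝ) - 1) * ((l : ℝ) - 2) * γε4 :=
  fourth_moment_eps_first_step_general b ε hbmeas hεmeas hindep hεmean hεint4 hbint4 hbmean γε4 hε4
end

section
/- With the notation above, 3·E[f_2^4 − f_5^4] − (l + 4)·E[f_3^4 − f_4^4] = 2l(l−1)(l−2)·γ_b⁴. -/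
/-!
Write `e_j = b + ε_j` and expand the combination in powers of `b`; the coefficients are
polynomials in the power sums of the `ε_j`. The coefficient of `b⁴` is `2l(l-1)(l-2)`. The
coefficients of `b³`, `b²` and `1` are sums of monomials in which some `ε_i` occurs to the first
power (in the coefficient of `b²` the terms `ε_j²` cancel), so they have mean zero by
independence, and the `b` term has mean zero because `E b = 0`. Since `b` is independent of the
`ε_j`, each term factors, leaving `2l(l-1)(l-2) E b⁴`.
-/

open MeasureTheory ProbabilityTheory Finset
open scoped ENNReal

namespace MeasureTheory

variable {α 𝕜 : Type*} [MeasurableSpace α] {μ : Measure α} {p : ℝ≥0∞}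

-- Hölder's inequality with exponents graded by degree: `p / j` for a product of `j` functions
-- in `Lᵖ`.
theorem MemLp.mul_div_natCast [NormedRing 𝕜] {f g : α → 𝕜} {j k : ℕ} (hp : p ≠ 0)
    (hf : MemLp f (p / j) μ) (hg : MemLp g (p / k) μ) : MemLp (f * g) (p / ↑(j + k)) μ := by
  have : ENNReal.HolderTriple (p / j) (p / k) (p / ↑(j + k)) := by
    have inv_div (m : ℕ) : (p / m)⁻¹ = m / p :=
      ENNReal.inv_div (Or.inl (ENNReal.natCast_ne_top m)) (Or.inr hp)
    exact ⟨by rw [inv_div, inv_div, inv_div, Nat.cast_add, ENNReal.div_add_div_same]⟩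
  exact hg.mul hf

theorem MemLp.pow_div_natCast [NormedRing 𝕜] {f : α → 𝕜} {j : ℕ} (hp : p ≠ 0)
    (hf : MemLp f (p / j) μ) : ∀ k : ℕ, MemLp (fun x => f x ^ k) (p / ↑(j * k)) μ
  | 0 => by simpa [ENNReal.div_zero hp] using memLp_top_const (μ := μ) (1 : 𝕜)
  | k + 1 => by
    simpa only [pow_succ, Nat.mul_succ, Pi.mul_def] using
      (hf.pow_div_natCast hp k).mul_div_natCast hp hf

theorem MemLp.integrable_of_div_natCast [IsFiniteMeasure μ] {E : Type*} [NormedAddCommGroup E]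
    {f : α → E} {d : ℕ} (hf : MemLp f (p / d) μ) (hd : d ≠ 0) (hdp : (d : ℝ≥0∞) ≤ p) :
    Integrable f μ :=
  hf.integrable <| (ENNReal.le_div_iff_mul_le (by simp [hd]) (by simp)).2 (by simpa using hdp)

theorem memLp_of_integrable_pow_of_even {f : α → ℝ} {k : ℕ} (hk : Even k)
    (hf : AEStronglyMeasurable f μ) (h : Integrable (fun x => f x ^ k) μ) : MemLp f k μ := by
  rcases eq_or_ne k 0 with rfl | hk0
  · simpa using memLp_zero_iff_aestronglyMeasurable.2 hf
  rw [← integrable_norm_rpow_iff hf (by simpa using hk0) (by simp)]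
  simpa [Real.norm_eq_abs, hk.pow_abs] using h

end MeasureTheory

theorem Finset.sum_mul_sum_sub_sum_mul {ι R : Type*} [NonUnitalNonAssocRing R] [DecidableEq ι]
    (s : Finset ι) (f g : ι → R) :
    (∑ i ∈ s, f i) * (∑ i ∈ s, g i) - ∑ i ∈ s, f i * g i
      = ∑ i ∈ s, ∑ j ∈ s.erase i, f i * g j := by
  rw [sum_mul_sum, ← sum_sub_distrib]
  exact sum_congr rfl fun i hi => (sum_erase_eq_sub hi).symm

theorem Finset.sum_const_add_pow {ι R : Type*} [CommSemiring R] (s : Finset ι) (x : R)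
    (y : ι → R) (k : ℕ) :
    ∑ j ∈ s, (x + y j) ^ k = ∑ m ∈ range (k + 1), k.choose m * x ^ (k - m) * ∑ j ∈ s, y j ^ m := by
  simp_rw [add_comm x, add_pow, mul_sum]
  rw [sum_comm]
  exact sum_congr rfl fun m _ => sum_congr rfl fun j _ => by ring

namespace ProbabilityTheory

variable {Ω ι : Type*} [MeasurableSpace Ω] {μ : Measure Ω}

theorem iIndepFun.indepFun_none_some [Fintype ι] {β : Type*} [MeasurableSpace β]
    {f : Option ι → Ω → β} (h : iIndepFun f μ) (hmeas : ∀ i, Measurable (f i)) :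
    IndepFun (f none) (fun ω i => f (some i) ω) μ := by
  have hnone : none ∈ ({none} : Finset (Option ι)) := mem_singleton_self _
  have hsome (i : ι) : some i ∈ univ.map .some := by simp
  exact (h.indepFun_finset {none} (univ.map .some) (by simp) hmeas).comp
    (measurable_pi_apply ⟨none, hnone⟩)
    (measurable_pi_lambda _ fun i => measurable_pi_apply ⟨_, hsome i⟩)

variable {X : ι → Ω → ℝ}

theorem iIndepFun.integral_comp_mul_eq_zero (h : iIndepFun X μ)
    (hmeas : ∀ i, Measurable (X i)) {i j k : ι} (hik : i ≠ k) (hjk : j ≠ k)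
    (hX : ∫ ω, X k ω ∂μ = 0) {φ : ℝ → ℝ → ℝ} (hφ : Measurable (Function.uncurry φ)) :
    ∫ ω, φ (X i ω) (X j ω) * X k ω ∂μ = 0 := by
  have := (h.indepFun_prodMk hmeas i j k hik hjk).integral_fun_comp_mul_comp
    ((hmeas i).prodMk (hmeas j)).aemeasurable (hmeas k).aemeasurable hφ.aestronglyMeasurable
    aestronglyMeasurable_id
  simpa [hX] using this

variable [IsProbabilityMeasure μ] [Fintype ι]

theorem iIndepFun.integral_sum_pow_mul_sum_sub (h : iIndepFun X μ)
    (hmeas : ∀ i, Measurable (X i)) (h4 : ∀ i, MemLp (X i) 4 μ) (h0 : ∀ i, ∫ ω, X i ω ∂μ = 0)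
    {m : ℕ} (hm : m ≤ 3) :
    ∫ ω, (∑ i, X i ω ^ m) * (∑ i, X i ω) - ∑ i, X i ω ^ (m + 1) ∂μ = 0 := by
  classical
  have h1 (i : ι) : MemLp (X i) (4 / ↑(1 : ℕ)) μ := by simpa using h4 i
  have hint (i j : ι) : Integrable (fun ω => X i ω ^ m * X j ω) μ :=
    (((h1 i).pow_div_natCast (by norm_num) m).mul_div_natCast (by norm_num) (h1 j)
      ).integrable_of_div_natCast (by omega) (by norm_cast; omega)
  simp_rw [pow_succ _ m, sum_mul_sum_sub_sum_mul]
  rw [integral_finsetSum _ fun i _ => integrable_finsetSum _ fun j _ => hint i j]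
  refine sum_eq_zero fun i _ => ?_
  rw [integral_finsetSum _ fun j _ => hint i j]
  refine sum_eq_zero fun j hj => ?_
  exact h.integral_comp_mul_eq_zero hmeas (ne_of_mem_erase hj).symm (ne_of_mem_erase hj).symm
    (h0 j) (φ := fun u _ => u ^ m) (by fun_prop)

end ProbabilityTheory

namespace FourthMoment

variable {ι : Type*} [Fintype ι]

-- `f25 e = f₂⁴ - f₅⁴` and `f34 e = f₃⁴ - f₄⁴` in the notation of the statement.
def f25 (y : ι → ℝ) : ℝ := (∑ j, y j ^ 2) * (∑ j, y j) ^ 2 - (∑ j, y j ^ 2) ^ 2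

def f34 (y : ι → ℝ) : ℝ := (∑ j, y j ^ 3) * (∑ j, y j) - ∑ j, y j ^ 4

def rest (n x : ℝ) (y : ι → ℝ) : ℝ :=
  x ^ 3 * (8 * (n - 1) * (n - 2) * ∑ j, y j)
    + x ^ 2 * (12 * (n - 2) * ((∑ j, y j) ^ 2 - ∑ j, y j ^ 2))
    + x * (6 * (∑ j, y j) ^ 3 + 3 * (n - 8) * ((∑ j, y j) * ∑ j, y j ^ 2)
      - (n ^ 2 - 16) * ∑ j, y j ^ 3)
    + (3 * f25 y - (n + 4) * f34 y)

theorem combination_const_add {n : ℝ} (hn : n = Fintype.card ι) (x : ℝ) (y : ι → ℝ) :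
    3 * f25 (fun j => x + y j) - (n + 4) * f34 (fun j => x + y j)
      = 2 * n * (n - 1) * (n - 2) * x ^ 4 + rest n x y := by
  have h1 : ∑ j, (x + y j) = n * x + ∑ j, y j := by
    rw [sum_add_distrib, sum_const, card_univ, nsmul_eq_mul, hn]
  simp only [rest, f25, f34, sum_const_add_pow univ x y, h1, sum_range_succ, range_zero,
    sum_empty, Nat.choose, Nat.cast_one, tsub_zero, one_mul, pow_zero, sum_const, card_univ,
    nsmul_eq_mul, ← hn, mul_one, zero_add, add_zero, Nat.reduceAdd, Nat.cast_ofNat,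
    Nat.add_one_sub_one, pow_one, tsub_self, Nat.reduceSub]
  ring

variable {Ω : Type*} [MeasurableSpace Ω] {μ : Measure Ω} [IsProbabilityMeasure μ]

theorem integrable_f25 {Y : ι → Ω → ℝ} (hY : ∀ j, MemLp (Y j) 4 μ) :
    Integrable (fun ω => f25 (fun j => Y j ω)) μ := by
  have h1 (j : ι) : MemLp (Y j) (4 / ↑(1 : ℕ)) μ := by simpa using hY j
  have hS1 : MemLp (fun ω => ∑ j, Y j ω) (4 / ↑(1 : ℕ)) μ := memLp_finsetSum _ fun j _ => h1 j
  have hS2 : MemLp (fun ω => ∑ j, Y j ω ^ 2) (4 / ↑(2 : ℕ)) μ :=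
    memLp_finsetSum _ fun j _ => (h1 j).pow_div_natCast (by norm_num) 2
  exact ((hS2.mul_div_natCast (by norm_num) (hS1.pow_div_natCast (by norm_num) 2)).sub
    (hS2.pow_div_natCast (by norm_num) 2)).integrable_of_div_natCast (by norm_num) (by norm_num)

theorem integrable_f34 {Y : ι → Ω → ℝ} (hY : ∀ j, MemLp (Y j) 4 μ) :
    Integrable (fun ω => f34 (fun j => Y j ω)) μ := by
  have h1 (j : ι) : MemLp (Y j) (4 / ↑(1 : ℕ)) μ := by simpa using hY j
  have hS (k : ℕ) : MemLp (fun ω => ∑ j, Y j ω ^ k) (4 / ↑(1 * k)) μ :=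
    memLp_finsetSum _ fun j _ => (h1 j).pow_div_natCast (by norm_num) k
  have hS1 : MemLp (fun ω => ∑ j, Y j ω) (4 / ↑(1 : ℕ)) μ := memLp_finsetSum _ fun j _ => h1 j
  exact (((hS 3).mul_div_natCast (by norm_num) hS1).sub (hS 4)).integrable_of_div_natCast
    (by norm_num) (by norm_num)

variable {X : ι → Ω → ℝ}

theorem integral_f25_eq_zero (h : iIndepFun X μ) (hmeas : ∀ i, Measurable (X i))
    (h4 : ∀ i, MemLp (X i) 4 μ) (h0 : ∀ i, ∫ ω, X i ω ∂μ = 0) :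
    ∫ ω, f25 (fun i => X i ω) ∂μ = 0 := by
  classical
  have h1 (i : ι) : MemLp (X i) (4 / ↑(1 : ℕ)) μ := by simpa using h4 i
  have hint (i j k : ι) : Integrable (fun ω => X k ω ^ 2 * (X i ω * X j ω)) μ :=
    (((h1 k).pow_div_natCast (by norm_num) 2).mul_div_natCast (by norm_num)
      ((h1 i).mul_div_natCast (by norm_num) (h1 j))).integrable_of_div_natCast
      (by norm_num) (by norm_num)
  have hoff (ω : Ω) : f25 (fun i => X i ω)
      = ∑ i, ∑ j ∈ univ.erase i, ∑ k, X k ω ^ 2 * (X i ω * X j ω) := by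
    have hsq : (∑ i, X i ω) ^ 2 - ∑ i, X i ω ^ 2 = ∑ i, ∑ j ∈ univ.erase i, X i ω * X j ω := by
      simp only [← sum_mul_sum_sub_sum_mul, sq]
    calc f25 (fun i => X i ω) = (∑ k, X k ω ^ 2) * ((∑ i, X i ω) ^ 2 - ∑ i, X i ω ^ 2) := by
          simp only [f25]
          ring
      _ = _ := by
          rw [hsq]
          simp_rw [mul_sum, sum_mul]
  simp_rw [hoff]
  rw [integral_finsetSum _ fun i _ => integrable_finsetSum _ fun j _ =>
    integrable_finsetSum _ fun k _ => hint i j k]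
  refine sum_eq_zero fun i _ => ?_
  rw [integral_finsetSum _ fun j _ => integrable_finsetSum _ fun k _ => hint i j k]
  refine sum_eq_zero fun j hj => ?_
  have hij := ne_of_mem_erase hj
  rw [integral_finsetSum _ fun k _ => hint i j k]
  refine sum_eq_zero fun k _ => ?_
  rcases eq_or_ne k j with rfl | hkj
  · calc ∫ ω, X k ω ^ 2 * (X i ω * X k ω) ∂μ = ∫ ω, X k ω ^ 3 * X i ω ∂μ := by
          congr 1; ext ω; ring
      _ = 0 := h.integral_comp_mul_eq_zero hmeas hij hij (h0 i) (φ := fun u _ => u ^ 3)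
          (by fun_prop)
  · calc ∫ ω, X k ω ^ 2 * (X i ω * X j ω) ∂μ = ∫ ω, X k ω ^ 2 * X i ω * X j ω ∂μ := by
          congr 1; ext ω; ring
      _ = 0 := h.integral_comp_mul_eq_zero hmeas hkj hij.symm (h0 j) (φ := fun u v => u ^ 2 * v)
          (by fun_prop)

variable {b : Ω → ℝ} {ε : ι → Ω → ℝ}

theorem integral_rest_eq_zero (n : ℝ) (hεm : ∀ j, Measurable (ε j)) (hε : iIndepFun ε μ)
    (hbε : IndepFun b (fun ω j => ε j ω) μ) (hb4 : MemLp b 4 μ) (hε4 : ∀ j, MemLp (ε j) 4 μ)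
    (hb0 : ∫ ω, b ω ∂μ = 0) (hε0 : ∀ j, ∫ ω, ε j ω ∂μ = 0) :
    ∫ ω, rest n (b ω) (fun j => ε j ω) ∂μ = 0 := by
  have h4 : (4 : ℝ≥0∞) ≠ 0 := by norm_num
  have hb1 : MemLp b (4 / ↑(1 : ℕ)) μ := by simpa using hb4
  have hε1 (j : ι) : MemLp (ε j) (4 / ↑(1 : ℕ)) μ := by simpa using hε4 j
  have hp1 : MemLp (fun ω => ∑ j, ε j ω) (4 / ↑(1 : ℕ)) μ := memLp_finsetSum _ fun j _ => hε1 j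
  have hp (k : ℕ) : MemLp (fun ω => ∑ j, ε j ω ^ k) (4 / ↑(1 * k)) μ :=
    memLp_finsetSum _ fun j _ => (hε1 j).pow_div_natCast h4 k
  -- integrability of the summands of `rest`, for the `fun_prop` discharger below
  have i3 : Integrable (fun ω => b ω ^ 3 * (8 * (n - 1) * (n - 2) * ∑ j, ε j ω)) μ :=
    ((hb1.pow_div_natCast h4 3).mul_div_natCast h4 (hp1.const_mul _)).integrable_of_div_natCast
      (by norm_num) (by norm_num)
  have i2 : Integrable
      (fun ω => b ω ^ 2 * (12 * (n - 2) * ((∑ j, ε j ω) ^ 2 - ∑ j, ε j ω ^ 2))) μ :=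
    ((hb1.pow_div_natCast h4 2).mul_div_natCast h4
      (((hp1.pow_div_natCast h4 2).sub (hp 2)).const_mul _)).integrable_of_div_natCast
      (by norm_num) (by norm_num)
  have i1 : Integrable (fun ω => b ω * (6 * (∑ j, ε j ω) ^ 3
      + 3 * (n - 8) * ((∑ j, ε j ω) * ∑ j, ε j ω ^ 2) - (n ^ 2 - 16) * ∑ j, ε j ω ^ 3)) μ :=
    (hb1.mul_div_natCast h4 ((((hp1.pow_div_natCast h4 3).const_mul 6).add
      ((hp1.mul_div_natCast h4 (hp 2)).const_mul _)).sub ((hp 3).const_mul _))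
      ).integrable_of_div_natCast (by norm_num) (by norm_num)
  have i25 := integrable_f25 hε4
  have i34 := integrable_f34 hε4
  have hp1_mean : ∫ ω, ∑ j, ε j ω ∂μ = 0 := by
    rw [integral_finsetSum _ fun j _ => (hε4 j).integrable (by norm_num)]
    exact sum_eq_zero fun j _ => hε0 j
  have hp2_mean : ∫ ω, (∑ j, ε j ω) ^ 2 - ∑ j, ε j ω ^ 2 ∂μ = 0 := by
    simpa [sq] using hε.integral_sum_pow_mul_sum_sub hεm hε4 hε0 (m := 1) (by norm_num)
  have hf34_mean : ∫ ω, f34 (fun j => ε j ω) ∂μ = 0 :=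
    hε.integral_sum_pow_mul_sum_sub hεm hε4 hε0 (m := 3) le_rfl
  have hbm := hb4.1.aemeasurable
  have hεm' := (measurable_pi_lambda _ hεm).aemeasurable (μ := μ)
  simp (disch := fun_prop) only [rest, integral_add, integral_sub, integral_const_mul]
  rw [hbε.integral_fun_comp_mul_comp hbm hεm' (f := fun x => x ^ 3)
      (g := fun v => 8 * (n - 1) * (n - 2) * ∑ j, v j) (by fun_prop) (by fun_prop),
    hbε.integral_fun_comp_mul_comp hbm hεm' (f := fun x => x ^ 2)
      (g := fun v => 12 * (n - 2) * ((∑ j, v j) ^ 2 - ∑ j, v j ^ 2)) (by fun_prop) (by fun_prop),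
    hbε.integral_fun_comp_mul_comp hbm hεm' (f := fun x => x) (g := fun v => 6 * (∑ j, v j) ^ 3
      + 3 * (n - 8) * ((∑ j, v j) * ∑ j, v j ^ 2) - (n ^ 2 - 16) * ∑ j, v j ^ 3)
      (by fun_prop) (by fun_prop),
    integral_const_mul, integral_const_mul, hp1_mean, hp2_mean, hb0,
    integral_f25_eq_zero hε hεm hε4 hε0, hf34_mean]
  ring

theorem integral_combination_eq (hεm : ∀ j, Measurable (ε j)) (hε : iIndepFun ε μ)
    (hbε : IndepFun b (fun ω j => ε j ω) μ) (hb4 : MemLp b 4 μ) (hε4 : ∀ j, MemLp (ε j) 4 μ)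
    (hb0 : ∫ ω, b ω ∂μ = 0) (hε0 : ∀ j, ∫ ω, ε j ω ∂μ = 0) :
    3 * ∫ ω, f25 (fun j => b ω + ε j ω) ∂μ
      - ((Fintype.card ι : ℝ) + 4) * ∫ ω, f34 (fun j => b ω + ε j ω) ∂μ
      = 2 * (Fintype.card ι : ℝ) * ((Fintype.card ι : ℝ) - 1) * ((Fintype.card ι : ℝ) - 2)
        * ∫ ω, b ω ^ 4 ∂μ := by
  set n : ℝ := (Fintype.card ι : ℝ)
  have he4 (j : ι) : MemLp (fun ω => b ω + ε j ω) 4 μ := hb4.add (hε4 j)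
  have h25 := (integrable_f25 he4).const_mul 3
  have h34 := (integrable_f34 he4).const_mul (n + 4)
  have hb4' : Integrable (fun ω => 2 * n * (n - 1) * (n - 2) * b ω ^ 4) μ :=
    ((hb4.integrable_norm_pow' (p := 4)).congr
      (ae_of_all _ fun ω => by simp [(by decide : Even 4).pow_abs])).const_mul _
  have hrest : Integrable (fun ω => rest n (b ω) (fun j => ε j ω)) μ :=
    ((h25.sub h34).sub hb4').congr (ae_of_all _ fun ω => by
      simp only [Pi.sub_apply, combination_const_add (n := n) rfl, add_sub_cancel_left])
  rw [← integral_const_mul, ← integral_const_mul, ← integral_sub h25 h34]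
  simp_rw [combination_const_add (n := n) rfl]
  rw [integral_add hb4' hrest, integral_const_mul,
    integral_rest_eq_zero n hεm hε hbε hb4 hε4 hb0 hε0, add_zero]

end FourthMoment

theorem fourth_moment_b_first_step_general
    {l : ℕ}
    {Ω : Type*} [MeasureSpace Ω] [IsProbabilityMeasure (ℙ : Measure Ω)]
    (b : Ω → ℝ) (ε : Fin l → Ω → ℝ)
    (hbmeas : Measurable b) (hεmeas : ∀ j, Measurable (ε j))
    (hindep : ProbabilityTheory.iIndepFun
      (fun i : Option (Fin l) => Option.elim i b ε) ℙ)
    (hεmean : ∀ j, ∫ ω, ε j ω = 0)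
    (hεint4 : ∀ j, Integrable (fun ω => (ε j ω) ^ 4) ℙ)
    (hbint4 : Integrable (fun ω => (b ω) ^ 4) ℙ)
    (hbmean : ∫ ω, b ω = 0)
    (γb4 : ℝ)
    (hb4 : ∫ ω, (b ω) ^ 4 = γb4) :
    3 * (∫ ω, ((∑ j, (b ω + ε j ω) ^ 2) * (∑ j, (b ω + ε j ω)) ^ 2
                - (∑ j, (b ω + ε j ω) ^ 2) ^ 2))
      - ((l : ℝ) + 4) * (∫ ω, ((∑ j, (b ω + ε j ω) ^ 3) * (∑ j, (b ω + ε j ω))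
                - ∑ j, (b ω + ε j ω) ^ 4))
      = 2 * (l : ℝ) * ((l : ℝ) - 1) * ((l : ℝ) - 2) * γb4 := by
  have hmeas : ∀ i, Measurable (Option.elim i b ε) := by
    rintro (_ | j)
    exacts [hbmeas, hεmeas j]
  have memLp_four {X : Ω → ℝ} (hX : Measurable X) (hX4 : Integrable (fun ω => X ω ^ 4)) :
      MemLp X 4 ℙ := by
    simpa using memLp_of_integrable_pow_of_even (by decide) hX.aestronglyMeasurable hX4
  have hε : iIndepFun ε ℙ := hindep.precomp (g := some) (Option.some_injective _)
  have hbε : IndepFun b (fun ω j => ε j ω) ℙ := hindep.indepFun_none_some hmeas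
  have key := FourthMoment.integral_combination_eq hεmeas hε hbε (memLp_four hbmeas hbint4)
    (fun j => memLp_four (hεmeas j) (hεint4 j)) hbmean hεmean
  rw [Fintype.card_fin, hb4] at key
  exact key

/-- first-step combination isolating the fourth moment of b. -/
theorem fourth_moment_b_first_step
    {l : ℕ} (hl : 3 ≤ l)
    {Ω : Type*} [MeasureSpace Ω] [IsProbabilityMeasure (ℙ : Measure Ω)]
    (b : Ω → ℝ) (ε : Fin l → Ω → ℝ)
    (hbmeas : Measurable b) (hεmeas : ∀ j, Measurable (ε j))
    (hindep : ProbabilityTheory.iIndepFun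
      (fun i : Option (Fin l) => Option.elim i b ε) ℙ)
    (hident : ∀ j j' : Fin l, Measure.map (ε j) ℙ = Measure.map (ε j') ℙ)
    (hεmean : ∀ j, ∫ ω, ε j ω = 0)
    (hεint4 : ∀ j, Integrable (fun ω => (ε j ω) ^ 4) ℙ)
    (hbint4 : Integrable (fun ω => (b ω) ^ 4) ℙ)
    (hbmean : ∫ ω, b ω = 0)
    (γb4 : ℝ)
    (hb4 : ∫ ω, (b ω) ^ 4 = γb4) :
    3 * (∫ ω, ((∑ j, (b ω + ε j ω) ^ 2) * (∑ j, (b ω + ε j ω)) ^ 2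
                - (∑ j, (b ω + ε j ω) ^ 2) ^ 2))
      - ((l : ℝ) + 4) * (∫ ω, ((∑ j, (b ω + ε j ω) ^ 3) * (∑ j, (b ω + ε j ω))
                - ∑ j, (b ω + ε j ω) ^ 4))
      = 2 * (l : ℝ) * ((l : ℝ) - 1) * ((l : ℝ) - 2) * γb4 :=
  fourth_moment_b_first_step_general b ε hbmeas hεmeas hindep hεmean hεint4 hbint4 hbmean γb4 hb4
end

section
/- In the simple random effects model e_j = b + ε_j with all group sizes equal to l, the identity (l−1)·l·γ_ε³ = l·E[f_3^3] − E[f_2^3] holds, where E[f_3^3] = E[Σ_j e_j³] and E[f_2^3] = E[(Σ_j e_j²)(Σ_j e_j)], i.e., γ_ε³ = (l·E[Σ_j e_j³] − E[(Σ_j e_j²)(Σ_j e_j)])/(l(l−1)). -/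
open MeasureTheory ProbabilityTheory Finset

/-- (l−1)·l·γ_ε³ = l·E[f_3^3] − E[f_2^3]. -/
theorem third_moment_first_step_identity
    {l : ℕ} (hl : 2 ≤ l)
    {Ω : Type*} [MeasureSpace Ω] [IsProbabilityMeasure (ℙ : Measure Ω)]
    (b : Ω → ℝ) (ε : Fin l → Ω → ℝ)
    (hbmeas : Measurable b) (hεmeas : ∀ j, Measurable (ε j))
    (hindep : ProbabilityTheory.iIndepFun
      (fun i : Option (Fin l) => Option.elim i b ε) ℙ)
    (hident : ∀ j j' : Fin l, Measure.map (ε j) ℙ = Measure.map (ε j') ℙ)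
    (hεmean : ∀ j, ∫ ω, ε j ω = 0)
    (hεint4 : ∀ j, Integrable (fun ω => (ε j ω) ^ 4) ℙ)
    (hbint4 : Integrable (fun ω => (b ω) ^ 4) ℙ)
    (hbmean : ∫ ω, b ω = 0)
    (hεint3 : ∀ j, Integrable (fun ω => (ε j ω) ^ 3) ℙ)
    (hbint3 : Integrable (fun ω => (b ω) ^ 3) ℙ)
    (γε3 : ℝ)
    (hε3 : ∀ j, ∫ ω, (ε j ω) ^ 3 = γε3) :
    ((l : ℝ) - 1) * (l : ℝ) * γε3
      = (l : ℝ) * (∫ ω, ∑ j, (b ω + ε j ω) ^ 3)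
        - ∫ ω, (∑ j, (b ω + ε j ω) ^ 2) * (∑ j, (b ω + ε j ω)) := by
  -- basic integrability from 4th moments
  have key : ∀ (X : Ω → ℝ), Measurable X → Integrable (fun ω => X ω ^ 4) ℙ →
      Integrable X ℙ ∧ Integrable (fun ω => X ω ^ 2) ℙ := by
    intro X hm h4
    have hg : Integrable (fun ω => 1 + X ω ^ 4) ℙ := (integrable_const 1).add h4
    constructor
    · refine hg.mono' hm.aestronglyMeasurable ?_
      filter_upwards with ω
      rw [Real.norm_eq_abs]
      rcases abs_cases (X ω) with ⟨h1, _⟩ | ⟨h1, _⟩ <;> rw [h1] <;>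
        nlinarith [sq_nonneg (X ω), sq_nonneg (X ω ^ 2 - 1), sq_nonneg (X ω - 1),
          sq_nonneg (X ω + 1), sq_nonneg (X ω ^ 2 - X ω), sq_nonneg (X ω ^ 2 + X ω)]
    · refine hg.mono' ((hm.pow_const 2).aestronglyMeasurable) ?_
      filter_upwards with ω
      rw [Real.norm_eq_abs, abs_of_nonneg (sq_nonneg _)]
      nlinarith [sq_nonneg (X ω ^ 2 - 1)]
  obtain ⟨hbint1, hbint2⟩ := key b hbmeas hbint4
  have hεint1 : ∀ j, Integrable (ε j) ℙ := fun j => (key (ε j) (hεmeas j) (hεint4 j)).1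
  have hεint2 : ∀ j, Integrable (fun ω => ε j ω ^ 2) ℙ :=
    fun j => (key (ε j) (hεmeas j) (hεint4 j)).2
  -- measurability of the family
  set f : Option (Fin l) → Ω → ℝ := fun i => Option.elim i b ε with hf
  have hfmeas : ∀ i, Measurable (f i) := by rintro (_ | j); exacts [hbmeas, hεmeas j]
  -- independence facts
  have hbe : ∀ j, IndepFun b (ε j) ℙ :=
    fun j => hindep.indepFun (show (none : Option (Fin l)) ≠ some j by simp)
  have hee : ∀ j k, j ≠ k → IndepFun (ε j) (ε k) ℙ := fun j k hjk =>
    hindep.indepFun (show (some j : Option (Fin l)) ≠ some k by simpa using hjk)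
  have hsq : Measurable fun x : ℝ => x ^ 2 := measurable_id.pow_const 2
  have hbe2 : ∀ j, IndepFun (fun ω => b ω ^ 2) (ε j) ℙ :=
    fun j => (hbe j).comp hsq measurable_id
  have he2b : ∀ j, IndepFun (fun ω => ε j ω ^ 2) b ℙ :=
    fun j => ((hbe j).symm.comp hsq measurable_id)
  have hbe2' : ∀ j, IndepFun b (fun ω => ε j ω ^ 2) ℙ :=
    fun j => (hbe j).comp measurable_id hsq
  have he2e : ∀ j k, j ≠ k → IndepFun (fun ω => ε j ω ^ 2) (ε k) ℙ :=
    fun j k hjk => (hee j k hjk).comp hsq measurable_id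
  have hbee : ∀ j k, j ≠ k → IndepFun (fun ω => b ω * ε j ω) (ε k) ℙ := by
    intro j k hjk
    exact hindep.indepFun_mul_left hfmeas none (some j) (some k) (by simp)
      (by simpa using hjk)
  -- zero integrals of products
  have zb2e : ∀ j, ∫ ω, b ω ^ 2 * ε j ω = 0 := by
    intro j
    rw [(hbe2 j).integral_fun_mul_eq_mul_integral ((hbmeas.pow_const 2).aestronglyMeasurable)
      ((hεmeas j).aestronglyMeasurable), hεmean j, mul_zero]
  have zbe2 : ∀ j, ∫ ω, b ω * ε j ω ^ 2 = 0 := by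
    intro j
    rw [(hbe2' j).integral_fun_mul_eq_mul_integral (hbmeas.aestronglyMeasurable)
      (((hεmeas j).pow_const 2).aestronglyMeasurable), hbmean, zero_mul]
  have ze2b : ∀ j, ∫ ω, ε j ω ^ 2 * b ω = 0 := by
    intro j
    rw [(he2b j).integral_fun_mul_eq_mul_integral (((hεmeas j).pow_const 2).aestronglyMeasurable)
      (hbmeas.aestronglyMeasurable), hbmean, mul_zero]
  have ze2e : ∀ j k, j ≠ k → ∫ ω, ε j ω ^ 2 * ε k ω = 0 := by
    intro j k hjk
    rw [(he2e j k hjk).integral_fun_mul_eq_mul_integral (((hεmeas j).pow_const 2).aestronglyMeasurable)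
      ((hεmeas k).aestronglyMeasurable), hεmean k, mul_zero]
  have zbee : ∀ j k, j ≠ k → ∫ ω, b ω * ε j ω * ε k ω = 0 := by
    intro j k hjk
    rw [(hbee j k hjk).integral_fun_mul_eq_mul_integral ((hbmeas.mul (hεmeas j)).aestronglyMeasurable)
      ((hεmeas k).aestronglyMeasurable), hεmean k, mul_zero]
  -- integrability of products
  have ib2e : ∀ j, Integrable (fun ω => b ω ^ 2 * ε j ω) ℙ :=
    fun j => (hbe2 j).integrable_mul hbint2 (hεint1 j)
  have ibe2 : ∀ j, Integrable (fun ω => b ω * ε j ω ^ 2) ℙ :=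
    fun j => (hbe2' j).integrable_mul hbint1 (hεint2 j)
  have ie2b : ∀ j, Integrable (fun ω => ε j ω ^ 2 * b ω) ℙ :=
    fun j => (he2b j).integrable_mul (hεint2 j) hbint1
  have ie2e : ∀ j k, j ≠ k → Integrable (fun ω => ε j ω ^ 2 * ε k ω) ℙ :=
    fun j k hjk => (he2e j k hjk).integrable_mul (hεint2 j) (hεint1 k)
  have ibee : ∀ j k, j ≠ k → Integrable (fun ω => b ω * ε j ω * ε k ω) ℙ :=
    fun j k hjk => (hbee j k hjk).integrable_mul
      ((hbe j).integrable_mul hbint1 (hεint1 j)) (hεint1 k)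
  set Eb3 : ℝ := ∫ ω, b ω ^ 3 with hEb3
  -- integral of each cube
  have icube : ∀ j, Integrable (fun ω => (b ω + ε j ω) ^ 3) ℙ := by
    intro j
    have : Integrable (fun ω => b ω ^ 3 + 3 * (b ω ^ 2 * ε j ω)
        + 3 * (b ω * ε j ω ^ 2) + ε j ω ^ 3) ℙ :=
      ((hbint3.add ((ib2e j).const_mul 3)).add ((ibe2 j).const_mul 3)).add (hεint3 j)
    exact this.congr (by filter_upwards with ω; ring)
  have cube : ∀ j, ∫ ω, (b ω + ε j ω) ^ 3 = Eb3 + γε3 := by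
    intro j
    have h1 : ∫ ω, (b ω + ε j ω) ^ 3
        = ∫ ω, (b ω ^ 3 + 3 * (b ω ^ 2 * ε j ω) + 3 * (b ω * ε j ω ^ 2) + ε j ω ^ 3) := by
      apply integral_congr_ae; filter_upwards with ω; ring
    have iA : Integrable (fun ω => b ω ^ 3 + 3 * (b ω ^ 2 * ε j ω)) ℙ :=
      hbint3.add ((ib2e j).const_mul 3)
    have iB : Integrable (fun ω => b ω ^ 3 + 3 * (b ω ^ 2 * ε j ω)
        + 3 * (b ω * ε j ω ^ 2)) ℙ := iA.add ((ibe2 j).const_mul 3)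
    rw [h1, integral_add iB (hεint3 j), integral_add iA ((ibe2 j).const_mul 3),
      integral_add hbint3 ((ib2e j).const_mul 3),
      integral_const_mul, integral_const_mul, zb2e j, zbe2 j, hε3 j]
    ring
  -- cross terms
  have icross : ∀ j k, j ≠ k → Integrable (fun ω => (b ω + ε j ω) ^ 2 * (b ω + ε k ω)) ℙ := by
    intro j k hjk
    have : Integrable (fun ω => b ω ^ 3 + b ω ^ 2 * ε k ω + 2 * (b ω ^ 2 * ε j ω)
        + 2 * (b ω * ε j ω * ε k ω) + ε j ω ^ 2 * b ω + ε j ω ^ 2 * ε k ω) ℙ :=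
      ((((hbint3.add (ib2e k)).add ((ib2e j).const_mul 2)).add
        ((ibee j k hjk).const_mul 2)).add (ie2b j)).add (ie2e j k hjk)
    exact this.congr (by filter_upwards with ω; ring)
  have cross : ∀ j k, j ≠ k → ∫ ω, (b ω + ε j ω) ^ 2 * (b ω + ε k ω) = Eb3 := by
    intro j k hjk
    have h1 : ∫ ω, (b ω + ε j ω) ^ 2 * (b ω + ε k ω)
        = ∫ ω, (b ω ^ 3 + b ω ^ 2 * ε k ω + 2 * (b ω ^ 2 * ε j ω)
            + 2 * (b ω * ε j ω * ε k ω) + ε j ω ^ 2 * b ω + ε j ω ^ 2 * ε k ω) := by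
      apply integral_congr_ae; filter_upwards with ω; ring
    have iA : Integrable (fun ω => b ω ^ 3 + b ω ^ 2 * ε k ω) ℙ := hbint3.add (ib2e k)
    have iB : Integrable (fun ω => b ω ^ 3 + b ω ^ 2 * ε k ω + 2 * (b ω ^ 2 * ε j ω)) ℙ :=
      iA.add ((ib2e j).const_mul 2)
    have iC : Integrable (fun ω => b ω ^ 3 + b ω ^ 2 * ε k ω + 2 * (b ω ^ 2 * ε j ω)
        + 2 * (b ω * ε j ω * ε k ω)) ℙ := iB.add ((ibee j k hjk).const_mul 2)
    have iD : Integrable (fun ω => b ω ^ 3 + b ω ^ 2 * ε k ω + 2 * (b ω ^ 2 * ε j ω)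
        + 2 * (b ω * ε j ω * ε k ω) + ε j ω ^ 2 * b ω) ℙ := iC.add (ie2b j)
    rw [h1, integral_add iD (ie2e j k hjk), integral_add iC (ie2b j),
      integral_add iB ((ibee j k hjk).const_mul 2), integral_add iA ((ib2e j).const_mul 2),
      integral_add hbint3 (ib2e k),
      integral_const_mul, integral_const_mul, zb2e k, zb2e j, zbee j k hjk,
      ze2b j, ze2e j k hjk]
    ring
  have hval : ∀ j k : Fin l, ∫ ω, (b ω + ε j ω) ^ 2 * (b ω + ε k ω)
      = if j = k then Eb3 + γε3 else Eb3 := by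
    intro j k
    by_cases h : j = k
    · subst h
      simp only [if_pos rfl]
      rw [← cube j]
      apply integral_congr_ae; filter_upwards with ω; ring
    · rw [if_neg h]; exact cross j k h
  -- first integral
  have I1 : ∫ ω, ∑ j, (b ω + ε j ω) ^ 3 = (l : ℝ) * (Eb3 + γε3) := by
    rw [integral_finset_sum _ (fun j _ => icube j)]
    simp only [cube, Finset.sum_const, Finset.card_univ, Fintype.card_fin, nsmul_eq_mul]
  -- second integral
  have idiag : ∀ j k : Fin l, Integrable (fun ω => (b ω + ε j ω) ^ 2 * (b ω + ε k ω)) ℙ := by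
    intro j k
    by_cases h : j = k
    · subst h
      exact (icube j).congr (by filter_upwards with ω; ring)
    · exact icross j k h
  have I2 : ∫ ω, (∑ j, (b ω + ε j ω) ^ 2) * (∑ j, (b ω + ε j ω))
      = (l : ℝ) * (Eb3 + γε3) + (l : ℝ) * ((l : ℝ) - 1) * Eb3 := by
    have h1 : ∫ ω, (∑ j, (b ω + ε j ω) ^ 2) * (∑ j, (b ω + ε j ω))
        = ∫ ω, ∑ j, ∑ k, (b ω + ε j ω) ^ 2 * (b ω + ε k ω) := by
      apply integral_congr_ae; filter_upwards with ω
      rw [Finset.sum_mul_sum]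
    have h2 : ∀ j : Fin l, ∑ k, ∫ ω, (b ω + ε j ω) ^ 2 * (b ω + ε k ω)
        = γε3 + (l : ℝ) * Eb3 := by
      intro j
      have hv : ∀ k : Fin l, ∫ ω, (b ω + ε j ω) ^ 2 * (b ω + ε k ω)
          = Eb3 + if j = k then γε3 else 0 := by
        intro k; rw [hval j k]; by_cases h : j = k <;> simp [h]
      simp only [hv, Finset.sum_add_distrib, Finset.sum_const, Finset.card_univ,
        Fintype.card_fin, nsmul_eq_mul, Finset.sum_ite_eq, Finset.mem_univ, if_pos]
      ring
    rw [h1, integral_finset_sum _ (fun j _ => integrable_finset_sum _ (fun k _ => idiag j k))]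
    have h3 : ∀ j : Fin l, ∫ ω, ∑ k, (b ω + ε j ω) ^ 2 * (b ω + ε k ω)
        = ∑ k, ∫ ω, (b ω + ε j ω) ^ 2 * (b ω + ε k ω) :=
      fun j => integral_finset_sum _ (fun k _ => idiag j k)
    calc (∑ j : Fin l, ∫ ω, ∑ k, (b ω + ε j ω) ^ 2 * (b ω + ε k ω))
        = ∑ j : Fin l, (γε3 + (l : ℝ) * Eb3) :=
          Finset.sum_congr rfl fun j _ => by rw [h3 j, h2 j]
      _ = (l : ℝ) * (γε3 + (l : ℝ) * Eb3) := by
          simp only [Finset.sum_const, Finset.card_univ, Fintype.card_fin, nsmul_eq_mul]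
      _ = (l : ℝ) * (Eb3 + γε3) + (l : ℝ) * ((l : ℝ) - 1) * Eb3 := by ring
  rw [I1, I2]
  ring
end
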